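/- For every graph G and every tree decomposition (U_v)_{v∈T} of G, there exists a strict tree decomposition (U'_v)_{v∈T'} of G whose width and height are at most those of (U_v)_{v∈T}. -/

import Mathlib

/-!
Let `μ(a)` be the topmost node whose bag contains `a`. For a node `v`, `U_{⌈v}` is the set of
vertices `a` with `v ≼ μ(a)`. First refine the tree: a node at depth `k` becomes a node `p` of
depth `k` together with a component of the subgraph induced by `{a | p ≼ μ(a)}`, nested inside the
component chosen at the parent, and keeps from `U_p` only the vertices whose own new node lies
above it. An edge `ab` with `μ(b) ≼ μ(a)` joins vertices of one component at every depth up to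
`μ(b)`, so edges stay covered, and now `U_{⌈v}` is connected for every non-root `v`. Then
contract onto the nodes of the form `μ(a)`, attaching each to its nearest such ancestor and
taking a shallowest one as the new root. Bags of kept nodes are unchanged and the sets `U_{⌈v}`
of kept nodes do not change either, so the result is strict; throughout, every new bag is
contained in an old bag at least as deep.
-/

open scoped Classical

/-- A tree domain: a (finite) prefix-closed set of finite sequences. -/
def PrefixClosed (T : Finset (List ℕ)) : Prop :=
  ∀ x ∈ T, ∀ y : List ℕ, y <+: x → y ∈ T

/-- A set of nodes of a tree domain is connected in the tree iff it has a root `r`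
below all its members such that all nodes between `r` and a member are members. -/
def ConnectedIn (S : Set (List ℕ)) : Prop :=
  ∃ r ∈ S, ∀ v ∈ S, r <+: v ∧ ∀ u : List ℕ, r <+: u → u <+: v → u ∈ S

/-- A tree decomposition of a graph `G`. -/
structure IsTreeDecomp {V : Type*} (G : SimpleGraph V)
    (T : Finset (List ℕ)) (bag : List ℕ → Finset V) : Prop where
  prefix_closed : PrefixClosed T
  vertex_conn : ∀ a : V, ConnectedIn {v | v ∈ T ∧ a ∈ bag v}
  edge_cover : ∀ a b : V, G.Adj a b → ∃ v ∈ T, a ∈ bag v ∧ b ∈ bag v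

/-- `U_{⌈v}`: the elements appearing in some bag at or below `v` but in no bag
strictly above `v`. -/
def AboveSet {V : Type*} (T : Finset (List ℕ)) (bag : List ℕ → Finset V)
    (v : List ℕ) : Set V :=
  {a | (∃ u ∈ T, v <+: u ∧ a ∈ bag u) ∧ ∀ u ∈ T, a ∈ bag u → ¬(u <+: v ∧ u ≠ v)}

/-- A tree decomposition is strict if every bag `U_v` contains an element whose minimal
bag is `U_v`, and for every non-root node `v` the subgraph of `G` induced by `U_{⌈v}`
is connected. -/
def IsStrict {V : Type*} (G : SimpleGraph V)
    (T : Finset (List ℕ)) (bag : List ℕ → Finset V) : Prop :=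
  (∀ v ∈ T, ∃ a ∈ bag v, ∀ u ∈ T, a ∈ bag u → v <+: u) ∧
  (∀ v ∈ T, v ≠ [] → (G.induce (AboveSet T bag v)).Connected)


namespace SimpleGraph

variable {V : Type*} (G : SimpleGraph V)

/-- The component of `a` in `G.induce X`, as a set of vertices (empty if `a ∉ X`). -/
def connectedComponentIn (X : Set V) (a : V) : Set V :=
  ⋃₀ {S | S ⊆ X ∧ a ∈ S ∧ (G.induce S).Connected}

variable {G} {X Y S : Set V} {a b c : V}

lemma connected_induce_singleton (a : V) : (G.induce {a}).Connected := by
  rw [induce_singleton_eq_top]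
  exact connected_top

lemma connectedComponentIn_subset : G.connectedComponentIn X a ⊆ X :=
  Set.sUnion_subset fun _ hS => hS.1

lemma subset_connectedComponentIn (hSX : S ⊆ X) (ha : a ∈ S) (hS : (G.induce S).Connected) :
    S ⊆ G.connectedComponentIn X a :=
  Set.subset_sUnion_of_mem ⟨hSX, ha, hS⟩

lemma connectedComponentIn_mono (hXY : X ⊆ Y) :
    G.connectedComponentIn X a ⊆ G.connectedComponentIn Y a :=
  Set.sUnion_mono fun _ hS => ⟨hS.1.trans hXY, hS.2⟩

lemma mem_connectedComponentIn (ha : a ∈ X) : a ∈ G.connectedComponentIn X a :=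
  subset_connectedComponentIn (Set.singleton_subset_iff.2 ha) rfl
    (connected_induce_singleton a) rfl

lemma connected_induce_connectedComponentIn (ha : a ∈ X) :
    (G.induce (G.connectedComponentIn X a)).Connected :=
  induce_sUnion_connected_of_pairwise_not_disjoint
    ⟨{a}, Set.singleton_subset_iff.2 ha, rfl, connected_induce_singleton a⟩
    (fun hS hT => ⟨a, hS.2.1, hT.2.1⟩) fun hS => hS.2.2

lemma connectedComponentIn_eq (hb : b ∈ G.connectedComponentIn X a) :
    G.connectedComponentIn X b = G.connectedComponentIn X a := by
  obtain ⟨_, ⟨hX, haS, -⟩, -⟩ := id hb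
  have hconn := connected_induce_connectedComponentIn (G := G) (hX haS)
  refine subset_antisymm ?_ (subset_connectedComponentIn connectedComponentIn_subset hb hconn)
  rintro d ⟨S, ⟨hSX, hbS, hS⟩, hdS⟩
  exact subset_connectedComponentIn (Set.union_subset hSX connectedComponentIn_subset)
    (Or.inr (mem_connectedComponentIn (hX haS)))
    (induce_union_connected hS.preconnected hconn.preconnected ⟨b, hbS, hb⟩) (Or.inl hdS)

lemma mem_connectedComponentIn_of_adj (hb : b ∈ G.connectedComponentIn X a) (hc : c ∈ X)
    (hbc : G.Adj b c) : c ∈ G.connectedComponentIn X a := by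
  rw [← connectedComponentIn_eq hb]
  exact subset_connectedComponentIn
    (Set.insert_subset (connectedComponentIn_subset hb) (Set.singleton_subset_iff.2 hc))
    (Set.mem_insert b {c}) (induce_pair_connected_of_adj hbc) (Set.mem_insert_of_mem b rfl)

end SimpleGraph

section RootMap

variable {V : Type*} {G : SimpleGraph V} {T : Finset (List ℕ)} {bag : List ℕ → Finset V}
  {r : V → List ℕ}

/-- `r a` is the node `μ(a)`: the top of the subtree of nodes whose bags contain `a`. -/
structure IsRootMap (T : Finset (List ℕ)) (bag : List ℕ → Finset V) (r : V → List ℕ) :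
    Prop where
  mem (a : V) : r a ∈ T
  mem_bag (a : V) : a ∈ bag (r a)
  prefix_of_mem_bag {a : V} {v : List ℕ} : v ∈ T → a ∈ bag v → r a <+: v
  mem_bag_of_prefix {a : V} {u v : List ℕ} :
    v ∈ T → a ∈ bag v → r a <+: u → u <+: v → a ∈ bag u

theorem IsTreeDecomp.exists_isRootMap (h : IsTreeDecomp G T bag) : ∃ r, IsRootMap T bag r := by
  choose r hr hmin using h.vertex_conn
  exact ⟨r, fun a => (hr a).1, fun a => (hr a).2, fun hv ha => (hmin _ _ ⟨hv, ha⟩).1,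
    fun hv ha hru huv => ((hmin _ _ ⟨hv, ha⟩).2 _ hru huv).2⟩

namespace IsRootMap

theorem finite (hr : IsRootMap T bag r) : Finite V :=
  Finite.of_injective (β := T.biUnion bag)
    (fun a => ⟨a, Finset.mem_biUnion.2 ⟨r a, hr.mem a, hr.mem_bag a⟩⟩)
    fun _ _ h => congrArg Subtype.val h

theorem aboveSet_eq (hr : IsRootMap T bag r) (v : List ℕ) :
    AboveSet T bag v = {a | v <+: r a} := by
  ext a
  constructor
  · rintro ⟨⟨u, hu, hvu, hau⟩, hnot⟩
    rcases List.prefix_or_prefix_of_prefix hvu (hr.prefix_of_mem_bag hu hau) with h | h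
    · exact h
    · by_contra hva
      exact hnot _ (hr.mem a) (hr.mem_bag a) ⟨h, fun h' => hva (h' ▸ List.prefix_refl v)⟩
  · intro hva
    refine ⟨⟨r a, hr.mem a, hva, hr.mem_bag a⟩, fun _ hu hau ⟨huv, hne⟩ => hne ?_⟩
    exact huv.eq_of_length_le (hva.trans (hr.prefix_of_mem_bag hu hau)).length_le

/-- Adjacent vertices have comparable roots, so it suffices to cover the edges `ab` with
`r b <+: r a`, for which `b` already lies in the bag at `r a`. -/
theorem edge_cover_of (htd : IsTreeDecomp G T bag) (hr : IsRootMap T bag r)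
    {T' : Finset (List ℕ)} {bag' : List ℕ → Finset V}
    (h : ∀ a b, G.Adj a b → r b <+: r a → b ∈ bag (r a) → ∃ v ∈ T', a ∈ bag' v ∧ b ∈ bag' v)
    (a b : V) (hab : G.Adj a b) : ∃ v ∈ T', a ∈ bag' v ∧ b ∈ bag' v := by
  obtain ⟨w, hw, haw, hbw⟩ := htd.edge_cover a b hab
  have hrw {d : V} (hd : d ∈ bag w) := hr.prefix_of_mem_bag hw hd
  rcases List.prefix_or_prefix_of_prefix (hrw hbw) (hrw haw) with hba | hab'
  · exact h a b hab hba (hr.mem_bag_of_prefix hw hbw hba (hrw haw))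
  · obtain ⟨v, hv, hbv, hav⟩ :=
      h b a hab.symm hab' (hr.mem_bag_of_prefix hw haw hab' (hrw hbw))
    exact ⟨v, hv, hav, hbv⟩

theorem isTreeDecomp (hr : IsRootMap T bag r) (hpc : PrefixClosed T)
    (hedge : ∀ a b, G.Adj a b → ∃ v ∈ T, a ∈ bag v ∧ b ∈ bag v) : IsTreeDecomp G T bag where
  prefix_closed := hpc
  vertex_conn a := ⟨r a, ⟨hr.mem a, hr.mem_bag a⟩, fun _ ⟨hv, hav⟩ =>
    ⟨hr.prefix_of_mem_bag hv hav, fun _ hru huv =>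
      ⟨hpc _ hv _ huv, hr.mem_bag_of_prefix hv hav hru huv⟩⟩⟩
  edge_cover := hedge

theorem isStrict (hr : IsRootMap T bag r) (hsurj : ∀ v ∈ T, ∃ a, r a = v)
    (hconn : ∀ v ∈ T, v ≠ [] → (G.induce {a | v <+: r a}).Connected) : IsStrict G T bag := by
  refine ⟨fun v hv => ?_, fun v hv hne => hr.aboveSet_eq v ▸ hconn v hv hne⟩
  obtain ⟨a, rfl⟩ := hsurj v hv
  exact ⟨a, hr.mem_bag a, fun _ hu hau => hr.prefix_of_mem_bag hu hau⟩

end IsRootMap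

def IsDominatedBy (T' : Finset (List ℕ)) (bag' : List ℕ → Finset V) (T : Finset (List ℕ))
    (bag : List ℕ → Finset V) : Prop :=
  ∀ y ∈ T', ∃ v ∈ T, y.length ≤ v.length ∧ bag' y ⊆ bag v

namespace IsDominatedBy

variable {T' T'' : Finset (List ℕ)} {bag' bag'' : List ℕ → Finset V}

theorem trans (h' : IsDominatedBy T'' bag'' T' bag') (h : IsDominatedBy T' bag' T bag) :
    IsDominatedBy T'' bag'' T bag := fun y hy => by
  obtain ⟨v', hv', hlen', hsub'⟩ := h' y hy
  obtain ⟨v, hv, hlen, hsub⟩ := h v' hv'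
  exact ⟨v, hv, hlen'.trans hlen, hsub'.trans hsub⟩

theorem length_lt (h : IsDominatedBy T' bag' T bag) {n : ℕ} (hn : ∀ x ∈ T, x.length < n) :
    ∀ y ∈ T', y.length < n := fun y hy => by
  obtain ⟨v, hv, hlen, -⟩ := h y hy
  exact hlen.trans_lt (hn v hv)

theorem card_le (h : IsDominatedBy T' bag' T bag) {k : ℕ} (hk : ∀ x ∈ T, (bag x).card ≤ k) :
    ∀ y ∈ T', (bag' y).card ≤ k := fun y hy => by
  obtain ⟨v, hv, -, hsub⟩ := h y hy
  exact (Finset.card_le_card hsub).trans (hk v hv)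

end IsDominatedBy

end RootMap

section Split

variable {V : Type*} (G : SimpleGraph V) (r : V → List ℕ) (κ : Set V → ℕ)

def verticesBelow (p : List ℕ) : Set V := {b | p <+: r b}

def splitComponent (a : V) (i : ℕ) : Set V :=
  G.connectedComponentIn (verticesBelow r ((r a).take (i + 1))) a

/-- The `i`-th label pairs the `i`-th entry of `r a` with a code of the component of `a` among
the vertices rooted below depth `i + 1`, so that distinct components get distinct nodes. -/
def splitRoot (a : V) : List ℕ :=
  List.ofFn fun i : Fin (r a).length => Nat.pair (r a)[i] (κ (splitComponent G r a i))

def splitTree [Fintype V] : Finset (List ℕ) :=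
  Finset.univ.biUnion fun a => (splitRoot G r κ a).inits.toFinset

def splitBag (bag : List ℕ → Finset V) (w : List ℕ) : Finset V :=
  (bag (w.map fun n => n.unpair.1)).filter fun a => splitRoot G r κ a <+: w

variable {G r κ} {a b : V} {i : ℕ}

lemma length_splitRoot : (splitRoot G r κ a).length = (r a).length := List.length_ofFn

lemma map_splitRoot : (splitRoot G r κ a).map (fun n => n.unpair.1) = r a := by
  simp [splitRoot, List.map_ofFn, Function.comp_def]

lemma getElem_splitRoot (hi : i < (splitRoot G r κ a).length) :
    (splitRoot G r κ a)[i] =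
      Nat.pair ((r a)[i]'(length_splitRoot (G := G) ▸ hi)) (κ (splitComponent G r a i)) := by
  simp [splitRoot]

lemma mem_splitComponent_self : a ∈ splitComponent G r a i :=
  SimpleGraph.mem_connectedComponentIn (List.take_prefix _ _)

lemma take_prefix_of_mem_splitComponent (hb : b ∈ splitComponent G r a i) :
    (r a).take (i + 1) <+: r b :=
  SimpleGraph.connectedComponentIn_subset (X := verticesBelow r _) hb

lemma splitComponent_anti {j : ℕ} (hij : i ≤ j) :
    splitComponent G r a j ⊆ splitComponent G r a i :=
  SimpleGraph.connectedComponentIn_mono fun _ hb =>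
    (List.take_prefix_take_left (by omega)).trans hb

lemma splitComponent_eq_of_mem (hi : i < (r a).length) (hb : b ∈ splitComponent G r a i) :
    splitComponent G r b i = splitComponent G r a i := by
  have hpre := take_prefix_of_mem_splitComponent hb
  have htake : (r b).take (i + 1) = (r a).take (i + 1) :=
    ((List.prefix_take_iff.2 ⟨hpre, by simp⟩).eq_of_length_le (by simp; omega)).symm
  rw [splitComponent, htake]
  exact SimpleGraph.connectedComponentIn_eq hb

theorem take_splitRoot_prefix_iff (hκ : Function.Injective κ) (hi : i < (r a).length) :
    (splitRoot G r κ a).take (i + 1) <+: splitRoot G r κ b ↔ b ∈ splitComponent G r a i := by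
  constructor
  · intro h
    have hlen := h.length_le
    simp only [List.length_take, length_splitRoot] at hlen
    have hlabel := h.getElem (i := i) (by simp [length_splitRoot]; omega)
    simp only [List.getElem_take, getElem_splitRoot] at hlabel
    rw [hκ (Nat.pair_eq_pair.1 hlabel).2]
    exact mem_splitComponent_self
  · intro hb
    have hpre := take_prefix_of_mem_splitComponent hb
    refine List.prefix_iff_getElem.2 ⟨by simpa [length_splitRoot] using hpre.length_le, ?_⟩
    intro k hk
    simp only [List.length_take, length_splitRoot] at hk
    simp only [List.getElem_take, getElem_splitRoot]
    rw [splitComponent_eq_of_mem (by omega) (splitComponent_anti (by omega : k ≤ i) hb),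
      (hpre.getElem (i := k) (by simp; omega)).symm.trans (List.getElem_take ..)]

lemma splitRoot_prefix_of_adj (hκ : Function.Injective κ) (hab : G.Adj a b)
    (hba : r b <+: r a) : splitRoot G r κ b <+: splitRoot G r κ a := by
  cases hi : (r b).length with
  | zero => exact List.eq_nil_of_length_eq_zero (length_splitRoot.trans hi) ▸ List.nil_prefix
  | succ i =>
    rw [← List.take_of_length_le (length_splitRoot.trans hi).le,
      take_splitRoot_prefix_iff hκ (by omega), splitComponent, List.take_of_length_le hi.le]
    exact SimpleGraph.mem_connectedComponentIn_of_adj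
      (SimpleGraph.mem_connectedComponentIn (List.prefix_refl _)) hba hab.symm

variable [Fintype V]

lemma mem_splitTree {w : List ℕ} : w ∈ splitTree G r κ ↔ ∃ a, w <+: splitRoot G r κ a := by
  simp [splitTree, List.mem_inits]

lemma prefixClosed_splitTree : PrefixClosed (splitTree G r κ) := fun _ hx _ hy => by
  obtain ⟨a, ha⟩ := mem_splitTree.1 hx
  exact mem_splitTree.2 ⟨a, hy.trans ha⟩

lemma connected_induce_splitTree (hκ : Function.Injective κ) {w : List ℕ}
    (hw : w ∈ splitTree G r κ) (hne : w ≠ []) :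
    (G.induce {a | w <+: splitRoot G r κ a}).Connected := by
  obtain ⟨b, hwb⟩ := mem_splitTree.1 hw
  obtain ⟨i, hi⟩ : ∃ i, w.length = i + 1 :=
    Nat.exists_eq_succ_of_ne_zero (by simpa [List.length_eq_zero_iff] using hne)
  have hib : i < (r b).length := by
    have := hwb.length_le
    rw [length_splitRoot] at this
    omega
  have hw : w = (splitRoot G r κ b).take (i + 1) := hi ▸ List.prefix_iff_eq_take.1 hwb
  have hset : {a | w <+: splitRoot G r κ a} = splitComponent G r b i := by
    ext a
    rw [Set.mem_ofPred_eq, hw, take_splitRoot_prefix_iff hκ hib]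
  rw [hset]
  exact SimpleGraph.connected_induce_connectedComponentIn (List.take_prefix _ _)

variable {T : Finset (List ℕ)} {bag : List ℕ → Finset V}
  (htd : IsTreeDecomp G T bag) (hr : IsRootMap T bag r)
include htd hr

lemma map_mem_of_mem_splitTree {w : List ℕ} (hw : w ∈ splitTree G r κ) :
    w.map (fun n => n.unpair.1) ∈ T := by
  obtain ⟨a, ha⟩ := mem_splitTree.1 hw
  exact htd.prefix_closed _ (hr.mem a) _
    (by simpa only [map_splitRoot] using ha.map fun n => n.unpair.1)

lemma isRootMap_splitRoot :
    IsRootMap (splitTree G r κ) (splitBag G r κ bag) (splitRoot G r κ) where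
  mem a := mem_splitTree.2 ⟨a, List.prefix_refl _⟩
  mem_bag a := Finset.mem_filter.2 ⟨by rw [map_splitRoot]; exact hr.mem_bag a, List.prefix_refl _⟩
  prefix_of_mem_bag _ ha := (Finset.mem_filter.1 ha).2
  mem_bag_of_prefix hv hav hau huv := by
    obtain ⟨hav, -⟩ := Finset.mem_filter.1 hav
    refine Finset.mem_filter.2 ⟨hr.mem_bag_of_prefix (map_mem_of_mem_splitTree htd hr hv) hav
      ?_ (huv.map _), hau⟩
    simpa only [map_splitRoot] using hau.map fun n => n.unpair.1

theorem isTreeDecomp_split (hκ : Function.Injective κ) :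
    IsTreeDecomp G (splitTree G r κ) (splitBag G r κ bag) :=
  (isRootMap_splitRoot htd hr).isTreeDecomp prefixClosed_splitTree <|
    hr.edge_cover_of htd fun a b hab hba hb =>
      ⟨splitRoot G r κ a, (isRootMap_splitRoot htd hr).mem a,
        (isRootMap_splitRoot htd hr).mem_bag a,
        Finset.mem_filter.2 ⟨by rwa [map_splitRoot], splitRoot_prefix_of_adj hκ hab hba⟩⟩

theorem isDominatedBy_split : IsDominatedBy (splitTree G r κ) (splitBag G r κ bag) T bag :=
  fun _ hw => ⟨_, map_mem_of_mem_splitTree htd hr hw, by simp, Finset.filter_subset _ _⟩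

theorem IsTreeDecomp.exists_split :
    ∃ (T₁ : Finset (List ℕ)) (bag₁ : List ℕ → Finset V) (r₁ : V → List ℕ),
      IsTreeDecomp G T₁ bag₁ ∧ IsRootMap T₁ bag₁ r₁ ∧
      (∀ w ∈ T₁, w ≠ [] → (G.induce {a | w <+: r₁ a}).Connected) ∧
      IsDominatedBy T₁ bag₁ T bag := by
  obtain ⟨κ, hκ⟩ := Countable.exists_injective_nat (Set V)
  exact ⟨_, _, _, isTreeDecomp_split htd hr hκ, isRootMap_splitRoot htd hr,
    fun _ => connected_induce_splitTree hκ, isDominatedBy_split htd hr⟩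

end Split

section Contract

variable (R : Set (List ℕ)) (ρ : List ℕ)

/-- A node is sent to the list of codes of its prefixes in `R \ {ρ}`; for `ρ` a shortest member
of `R`, this contracts the tree onto the nodes of `R`, with `ρ` becoming the root `[]`. -/
noncomputable def contract (v : List ℕ) : List ℕ :=
  (v.inits.filter fun p => p ∈ R ∧ p ≠ ρ).map Encodable.encode

variable {R ρ} {u v : List ℕ}

lemma contract_concat_of_mem (x : ℕ) (hx : v ++ [x] ∈ R ∧ v ++ [x] ≠ ρ) :
    contract R ρ (v ++ [x]) = contract R ρ v ++ [Encodable.encode (v ++ [x])] := by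
  simp [contract, hx]

lemma contract_concat_of_not_mem (x : ℕ) (hx : ¬(v ++ [x] ∈ R ∧ v ++ [x] ≠ ρ)) :
    contract R ρ (v ++ [x]) = contract R ρ v := by
  simp_all [contract]

lemma mem_contract {y : ℕ} :
    y ∈ contract R ρ v ↔ ∃ p, p <+: v ∧ p ∈ R ∧ p ≠ ρ ∧ Encodable.encode p = y := by
  simp [contract, List.mem_inits, and_assoc]

lemma encode_mem_contract {p : List ℕ} :
    Encodable.encode p ∈ contract R ρ v ↔ p <+: v ∧ p ∈ R ∧ p ≠ ρ := by
  simp [mem_contract, Encodable.encode_injective.eq_iff]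

lemma contract_mono (h : u <+: v) : contract R ρ u <+: contract R ρ v := by
  rw [contract, List.prefix_iff_eq_take.1 h, List.take_inits]
  exact ((List.take_prefix _ _).filter _).map _

lemma contract_prefix_contract_iff (hu : u ∈ R) (huρ : u ≠ ρ) :
    contract R ρ u <+: contract R ρ v ↔ u <+: v :=
  ⟨fun h => (encode_mem_contract.1
      (h.subset (encode_mem_contract.2 ⟨List.prefix_refl u, hu, huρ⟩))).1,
    contract_mono⟩

variable (hmin : ∀ p ∈ R, ρ.length ≤ p.length)
include hmin

lemma contract_eq_nil_of_prefix (hv : v <+: ρ) : contract R ρ v = [] :=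
  List.eq_nil_iff_forall_not_mem.2 fun _ hy => by
    obtain ⟨p, hpv, hpR, hpρ, -⟩ := mem_contract.1 hy
    exact hpρ ((hpv.trans hv).eq_of_length_le (hmin p hpR))

lemma contract_eq_nil_iff (hv : v ∈ R) : contract R ρ v = [] ↔ v = ρ :=
  ⟨fun h => by_contra fun hvρ => by
    simpa [h] using encode_mem_contract.2 ⟨List.prefix_refl v, hv, hvρ⟩,
   fun h => contract_eq_nil_of_prefix hmin (h ▸ List.prefix_refl v)⟩

lemma contract_injOn : Set.InjOn (contract R ρ) R := by
  intro u hu v hv h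
  rcases eq_or_ne u ρ with rfl | huρ
  · exact ((contract_eq_nil_iff hmin hv).1 (h ▸ (contract_eq_nil_iff hmin hu).2 rfl)).symm
  rcases eq_or_ne v ρ with rfl | hvρ
  · exact (contract_eq_nil_iff hmin hu).1 (h.trans ((contract_eq_nil_iff hmin hv).2 rfl))
  have huv := (contract_prefix_contract_iff (v := v) hu huρ).1 (h ▸ List.prefix_refl _)
  exact huv.eq_of_length_le
    ((contract_prefix_contract_iff (v := u) hv hvρ).1 (h ▸ List.prefix_refl _)).length_le

lemma eq_nil_or_exists_of_prefix_contract {y : List ℕ} (hy : y <+: contract R ρ v) :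
    y = [] ∨ ∃ u ∈ R, u ≠ ρ ∧ u <+: v ∧ contract R ρ u = y := by
  induction v using List.reverseRecOn generalizing y with
  | nil => exact Or.inl (List.prefix_nil.1 (contract_eq_nil_of_prefix hmin List.nil_prefix ▸ hy))
  | append_singleton v x ih =>
    have extend : (y = [] ∨ ∃ u ∈ R, u ≠ ρ ∧ u <+: v ∧ contract R ρ u = y) →
        y = [] ∨ ∃ u ∈ R, u ≠ ρ ∧ u <+: v ++ [x] ∧ contract R ρ u = y :=
      Or.imp_right fun ⟨u, hu, huρ, huv, hy⟩ => ⟨u, hu, huρ, huv.trans (v.prefix_append _), hy⟩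
    by_cases hx : v ++ [x] ∈ R ∧ v ++ [x] ≠ ρ
    · rw [contract_concat_of_mem x hx] at hy
      rcases List.prefix_concat_iff.1 hy with rfl | hy
      · exact Or.inr ⟨v ++ [x], hx.1, hx.2, List.prefix_refl _, contract_concat_of_mem x hx⟩
      · exact extend (ih hy)
    · exact extend (ih (contract_concat_of_not_mem x hx ▸ hy))

lemma length_contract_le (v : List ℕ) : (contract R ρ v).length ≤ v.length := by
  rcases v with _ | ⟨a, l⟩
  · simp [contract_eq_nil_of_prefix hmin List.nil_prefix]
  · have hnil : ¬([] ∈ R ∧ [] ≠ ρ) := fun ⟨hR, hρ⟩ =>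
      hρ (List.eq_nil_of_length_eq_zero (Nat.le_zero.1 (hmin [] hR))).symm
    simp only [contract, List.inits_cons, List.filter_cons, hnil, decide_false, List.length_map]
    exact (List.length_filter_le _ _).trans (by simp)

end Contract

section ContractDecomp

variable {V : Type*} [Fintype V] {G : SimpleGraph V} {T : Finset (List ℕ)}
  (bag : List ℕ → Finset V) (r : V → List ℕ) (a₀ : V)

local notation "c" => contract (Set.range r) (r a₀)

noncomputable def contractTree : Finset (List ℕ) := Finset.univ.image fun a => c (r a)

noncomputable def contractBag (y : List ℕ) : Finset V :=
  Finset.univ.filter fun a => ∃ b, c (r b) = y ∧ a ∈ bag (r b)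

variable {bag r a₀}

lemma mem_contractTree {y : List ℕ} : y ∈ contractTree r a₀ ↔ ∃ b, c (r b) = y := by
  simp [contractTree]

variable (hmin : ∀ a, (r a₀).length ≤ (r a).length)
include hmin

lemma contractBag_contract (b : V) : contractBag bag r a₀ (c (r b)) = bag (r b) := by
  ext a
  simp only [contractBag, Finset.mem_filter, Finset.mem_univ, true_and]
  refine ⟨fun ⟨d, hd, ha⟩ => ?_, fun ha => ⟨b, rfl, ha⟩⟩
  rwa [← contract_injOn (Set.forall_mem_range.2 hmin) ⟨d, rfl⟩ ⟨b, rfl⟩ hd]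

lemma prefixClosed_contractTree : PrefixClosed (contractTree r a₀) := fun _ hx y hy => by
  obtain ⟨b, rfl⟩ := mem_contractTree.1 hx
  rcases eq_nil_or_exists_of_prefix_contract (Set.forall_mem_range.2 hmin) hy with
    rfl | ⟨_, ⟨d, rfl⟩, -, -, rfl⟩
  · exact mem_contractTree.2
      ⟨a₀, (contract_eq_nil_iff (Set.forall_mem_range.2 hmin) ⟨a₀, rfl⟩).2 rfl⟩
  · exact mem_contractTree.2 ⟨d, rfl⟩

variable (hr : IsRootMap T bag r)
include hr

lemma isRootMap_contract :
    IsRootMap (contractTree r a₀) (contractBag bag r a₀) fun a => c (r a) where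
  mem a := mem_contractTree.2 ⟨a, rfl⟩
  mem_bag a := contractBag_contract hmin a ▸ hr.mem_bag a
  prefix_of_mem_bag {a y} hy hay := by
    obtain ⟨b, rfl⟩ := mem_contractTree.1 hy
    rw [contractBag_contract hmin] at hay
    exact contract_mono (hr.prefix_of_mem_bag (hr.mem b) hay)
  mem_bag_of_prefix {a y' y} hy hay hay' hy' := by
    obtain ⟨b, rfl⟩ := mem_contractTree.1 hy
    rw [contractBag_contract hmin] at hay
    rcases eq_nil_or_exists_of_prefix_contract (Set.forall_mem_range.2 hmin) hy' with
      rfl | ⟨_, ⟨d, rfl⟩, -, hdb, rfl⟩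
    · rw [← List.prefix_nil.1 hay']
      exact contractBag_contract hmin a ▸ hr.mem_bag a
    · have had : r a <+: r d := by
        rcases List.prefix_or_prefix_of_prefix (hr.prefix_of_mem_bag (hr.mem b) hay) hdb with
          h | h
        · exact h
        · rw [contract_injOn (Set.forall_mem_range.2 hmin) ⟨a, rfl⟩ ⟨d, rfl⟩
            (hay'.eq_of_length_le (contract_mono h).length_le)]
      rw [contractBag_contract hmin]
      exact hr.mem_bag_of_prefix (hr.mem b) hay had hdb

theorem isTreeDecomp_contract (htd : IsTreeDecomp G T bag) :
    IsTreeDecomp G (contractTree r a₀) (contractBag bag r a₀) :=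
  (isRootMap_contract hmin hr).isTreeDecomp (prefixClosed_contractTree hmin) <|
    hr.edge_cover_of htd fun a _ _ _ hb =>
      ⟨c (r a), (isRootMap_contract hmin hr).mem a, (isRootMap_contract hmin hr).mem_bag a,
        contractBag_contract hmin a ▸ hb⟩

theorem isStrict_contract (hconn : ∀ v ∈ T, v ≠ [] → (G.induce {a | v <+: r a}).Connected) :
    IsStrict G (contractTree r a₀) (contractBag bag r a₀) := by
  refine (isRootMap_contract hmin hr).isStrict (fun _ hy => mem_contractTree.1 hy)
    fun y hy hne => ?_
  obtain ⟨b, rfl⟩ := mem_contractTree.1 hy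
  have hbρ : r b ≠ r a₀ := fun h =>
    hne ((contract_eq_nil_iff (Set.forall_mem_range.2 hmin) ⟨b, rfl⟩).2 h)
  have hb : r b ≠ [] := fun h =>
    hne (contract_eq_nil_of_prefix (Set.forall_mem_range.2 hmin) (h ▸ List.nil_prefix))
  have hset : {a | c (r b) <+: c (r a)} = {a | r b <+: r a} :=
    Set.ext fun _ => contract_prefix_contract_iff ⟨b, rfl⟩ hbρ
  rw [hset]
  exact hconn _ (hr.mem b) hb

theorem isDominatedBy_contract :
    IsDominatedBy (contractTree r a₀) (contractBag bag r a₀) T bag := fun _ hy => by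
  obtain ⟨b, rfl⟩ := mem_contractTree.1 hy
  exact ⟨r b, hr.mem b, length_contract_le (Set.forall_mem_range.2 hmin) _,
    (contractBag_contract hmin b).subset⟩

end ContractDecomp

theorem IsTreeDecomp.exists_contract {V : Type*} [Fintype V] [Nonempty V] {G : SimpleGraph V}
    {T : Finset (List ℕ)} {bag : List ℕ → Finset V} {r : V → List ℕ}
    (htd : IsTreeDecomp G T bag) (hr : IsRootMap T bag r)
    (hconn : ∀ v ∈ T, v ≠ [] → (G.induce {a | v <+: r a}).Connected) :
    ∃ (T' : Finset (List ℕ)) (bag' : List ℕ → Finset V),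
      IsTreeDecomp G T' bag' ∧ IsStrict G T' bag' ∧ IsDominatedBy T' bag' T bag := by
  obtain ⟨a₀, hmin⟩ := Finite.exists_min fun a => (r a).length
  exact ⟨_, _, isTreeDecomp_contract hmin hr htd, isStrict_contract hmin hr hconn,
    isDominatedBy_contract hmin hr⟩

/-- For every tree decomposition of a graph `G` there is a strict tree
decomposition of `G` whose width and height are at most those of the given one. -/
theorem stmt_9 {V : Type*} (G : SimpleGraph V)
    (T : Finset (List ℕ)) (bag : List ℕ → Finset V)
    (h : IsTreeDecomp G T bag) :
    ∃ (T' : Finset (List ℕ)) (bag' : List ℕ → Finset V),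
      IsTreeDecomp G T' bag' ∧ IsStrict G T' bag' ∧
      (∀ n : ℕ, (∀ x ∈ T, x.length < n) → ∀ x ∈ T', x.length < n) ∧
      (∀ k : ℕ, (∀ x ∈ T, (bag x).card ≤ k) → ∀ x ∈ T', (bag' x).card ≤ k) := by
  rcases isEmpty_or_nonempty V with _ | _
  · exact ⟨∅, fun _ => ∅, ⟨by simp [PrefixClosed], isEmptyElim, isEmptyElim⟩, by simp [IsStrict],
      by simp, by simp⟩
  obtain ⟨r, hr⟩ := h.exists_isRootMap
  have := hr.finite
  have := Fintype.ofFinite V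
  obtain ⟨T₁, bag₁, r₁, htd₁, hr₁, hconn₁, hdom₁⟩ := h.exists_split hr
  obtain ⟨T', bag', htd', hstrict', hdom'⟩ := htd₁.exists_contract hr₁ hconn₁
  exact ⟨T', bag', htd', hstrict', fun _ => (hdom'.trans hdom₁).length_lt,
    fun _ => (hdom'.trans hdom₁).card_le⟩
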